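/- arXiv:2604.01367 — 3 statements merged into one kernel-verified Lean document; each statement's English description precedes it below -/
import Mathlib

section
/- For every natural number n and every complex number t, (1/n!)·∑_{π ∈ Sym(Fin n)} t^{fix(π)} = ∑_{k=0}^{n} (t−1)^k / k!, where fix(π) is the number of fixed points of π. Moreover, for every real number t > 1, (1/n!)·∑_{π ∈ Sym(Fin n)} t^{fix(π)} ≤ exp(t−1). -/
open Finset

lemma card_fixing (n : ℕ) (S : Finset (Fin n)) :
    (univ.filter (fun π : Equiv.Perm (Fin n) => ∀ i ∈ S, π i = i)).card
      = (n - S.card).factorial := by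
  classical
  rw [← Fintype.card_subtype]
  have hiff : ∀ π : Equiv.Perm (Fin n),
      (∀ i ∈ S, π i = i) ↔ ∀ a : Fin n, ¬(a ∉ S) → π a = a := fun π =>
    ⟨fun h a ha => h a (not_not.mp ha), fun h a ha => h a (not_not_intro ha)⟩
  have e : {π : Equiv.Perm (Fin n) // ∀ i ∈ S, π i = i}
      ≃ Equiv.Perm {x : Fin n // x ∉ S} :=
    (Equiv.subtypeEquivRight hiff).trans
      (Equiv.Perm.subtypeEquivSubtypePerm (fun x => x ∉ S)).symm
  rw [Fintype.card_congr e, Fintype.card_perm]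
  congr 1
  simp [Fintype.card_subtype_compl]

lemma key (n : ℕ) {R : Type*} [CommRing R] (t : R) :
    ∑ π : Equiv.Perm (Fin n), t ^ (univ.filter fun i => π i = i).card
      = ∑ k ∈ range (n + 1), ((n.choose k * (n - k).factorial : ℕ) : R) * (t - 1) ^ k := by
  classical
  have step1 : ∀ π : Equiv.Perm (Fin n),
      t ^ (univ.filter fun i => π i = i).card
        = ∑ S : Finset (Fin n), if (∀ i ∈ S, π i = i) then (t - 1) ^ S.card else 0 := by
    intro π
    have h1 : t ^ (univ.filter fun i => π i = i).card
        = ∑ S ∈ (univ.filter fun i => π i = i).powerset, (t - 1) ^ S.card := by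
      calc t ^ (univ.filter fun i => π i = i).card
          = ∏ _i ∈ (univ.filter fun i => π i = i), ((t - 1) + 1) := by
            rw [Finset.prod_const]; ring_nf
        _ = ∑ S ∈ (univ.filter fun i => π i = i).powerset, (t-1)^S.card := by
            rw [Finset.prod_add]; simp
    rw [h1]
    rw [show (univ.filter fun i => π i = i).powerset
        = univ.filter (fun S : Finset (Fin n) => ∀ i ∈ S, π i = i) by
      ext S; simp [Finset.mem_powerset, Finset.subset_iff]]
    rw [Finset.sum_filter]
  simp_rw [step1]
  rw [Finset.sum_comm]
  have step2 : ∀ S : Finset (Fin n),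
      (∑ π : Equiv.Perm (Fin n), if (∀ i ∈ S, π i = i) then (t - 1) ^ S.card else 0)
        = ((n - S.card).factorial : ℕ) * (t - 1) ^ S.card := by
    intro S
    rw [← Finset.sum_filter, Finset.sum_const, card_fixing, nsmul_eq_mul]
  simp_rw [step2]
  rw [show (univ : Finset (Finset (Fin n))) = (univ : Finset (Fin n)).powerset by
    simp [Finset.powerset_univ]]
  rw [Finset.sum_powerset_apply_card (fun m => ((n - m).factorial : R) * (t - 1) ^ m)]
  simp only [Finset.card_univ, Fintype.card_fin]
  refine Finset.sum_congr rfl fun k _ => ?_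
  push_cast
  rw [nsmul_eq_mul]
  ring

lemma genfun {K : Type*} [Field K] [CharZero K] (n : ℕ) (t : K) :
    (1 / (n.factorial : K)) *
        ∑ π : Equiv.Perm (Fin n), t ^ (Finset.univ.filter fun i => π i = i).card
      = ∑ k ∈ Finset.range (n + 1), (t - 1) ^ k / (k.factorial : K) := by
  rw [key, Finset.mul_sum]
  refine Finset.sum_congr rfl fun k hk => ?_
  have hkn : k ≤ n := Nat.lt_succ_iff.mp (Finset.mem_range.mp hk)
  have hfact : ((n.choose k * k.factorial * (n - k).factorial : ℕ) : K) = (n.factorial : K) := by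
    exact_mod_cast congrArg (fun m : ℕ => (m : K)) (Nat.choose_mul_factorial_mul_factorial hkn)
  push_cast at hfact ⊢
  have h1 : (n.factorial : K) ≠ 0 := Nat.cast_ne_zero.mpr n.factorial_ne_zero
  have h2 : (k.factorial : K) ≠ 0 := Nat.cast_ne_zero.mpr k.factorial_ne_zero
  field_simp
  linear_combination (t - 1) ^ k * hfact

/-- For every natural number `n` and every complex `t`,
`(1/n!) · ∑_{π ∈ Sym(Fin n)} t^{fix(π)} = ∑_{k=0}^{n} (t−1)^k / k!`, where `fix(π)` is the
number of fixed points of `π`; moreover for real `t > 1` the left-hand side is at most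
`exp (t − 1)`. -/
theorem perm_fixedPoints_genFun (n : ℕ) :
    (∀ t : ℂ,
      (1 / (n.factorial : ℂ)) *
          ∑ π : Equiv.Perm (Fin n), t ^ (Finset.univ.filter fun i => π i = i).card =
        ∑ k ∈ Finset.range (n + 1), (t - 1) ^ k / (k.factorial : ℂ)) ∧
    (∀ t : ℝ, 1 < t →
      (1 / (n.factorial : ℝ)) *
          ∑ π : Equiv.Perm (Fin n), t ^ (Finset.univ.filter fun i => π i = i).card ≤
        Real.exp (t - 1)) := by
  constructor
  · exact fun t => genfun n t
  · intro t ht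
    rw [genfun n t]
    exact Real.sum_le_exp_of_nonneg (by linarith) (n + 1)
end

section
/- Let n ≥ 1 and let W be an n×n random matrix whose entries are i.i.d. complex random variables of law μ with ∫ w dμ(w) = 0 and ∫ |w|² dμ(w) = 1. Let 0 < c < 1 and let μ₀ ∈ ℂ (a deterministic shift) satisfy |μ₀| = c/√n. Set Δ := per(W + μ₀·J) − per(W). Then E[|Δ|²] ≤ n! · c²/(1 − c²). -/
open MeasureTheory

/-- The permanent of an `n × n` complex matrix. -/
noncomputable def per {n : ℕ} (A : Matrix (Fin n) (Fin n) ℂ) : ℂ :=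
  ∑ σ : Equiv.Perm (Fin n), ∏ i : Fin n, A i (σ i)

namespace PermStabAux
open Finset

/-! ### Integration on product spaces -/

lemma pi_integral_prod {ι : Type*} [Fintype ι] (μ : Measure ℂ) [SigmaFinite μ] (f : ι → ℂ → ℂ) :
    ∫ x : ι → ℂ, ∏ i, f i (x i) ∂Measure.pi (fun _ : ι => μ) = ∏ i, ∫ x, f i x ∂μ := by
  letI m : MeasureSpace ℂ := ⟨μ⟩
  haveI : SigmaFinite (m.volume) := ‹SigmaFinite μ›
  exact integral_fintype_prod_eq_prod (𝕜 := ℂ) (E := fun _ : ι => ℂ) f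

lemma pi_integrable_prod {ι : Type*} [Fintype ι] (μ : Measure ℂ) [SigmaFinite μ] (f : ι → ℂ → ℂ)
    (hf : ∀ i, Integrable (f i) μ) :
    Integrable (fun x : ι → ℂ => ∏ i, f i (x i)) (Measure.pi (fun _ : ι => μ)) := by
  letI m : MeasureSpace ℂ := ⟨μ⟩
  haveI : SigmaFinite (m.volume) := ‹SigmaFinite μ›
  exact Integrable.fintype_prod (𝕜 := ℂ) (f := f) hf

/-! ### Basic integrability from the moment hypotheses -/

lemma integrable_sq {μ : Measure ℂ} (hvar : (∫ w, ‖w‖ ^ 2 ∂μ) = 1) :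
    Integrable (fun w : ℂ => ‖w‖ ^ 2) μ := by
  by_contra h
  rw [integral_undef h] at hvar
  norm_num at hvar

lemma integrable_id' {μ : Measure ℂ} [IsProbabilityMeasure μ]
    (hvar : (∫ w, ‖w‖ ^ 2 ∂μ) = 1) : Integrable (fun w : ℂ => w) μ := by
  refine Integrable.mono' (g := fun w : ℂ => (‖w‖ ^ 2 + 1) / 2)
    (((integrable_sq hvar).add (integrable_const 1)).div_const 2)
    measurable_id.aestronglyMeasurable ?_
  refine Filter.Eventually.of_forall fun w => ?_
  have h0 : 0 ≤ ‖w‖ := norm_nonneg w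
  have h1 : ‖w‖ = ‖w‖ := rfl
  rw [h1]
  nlinarith [sq_nonneg (‖w‖ - 1)]

lemma integrable_mul_conj {μ : Measure ℂ} (hvar : (∫ w, ‖w‖ ^ 2 ∂μ) = 1) :
    Integrable (fun w : ℂ => w * (starRingEnd ℂ) w) μ := by
  have h : (fun w : ℂ => w * (starRingEnd ℂ) w) = fun w : ℂ => ((‖w‖ ^ 2 : ℝ) : ℂ) := by
    funext w
    rw [Complex.mul_conj, Complex.normSq_eq_norm_sq]
  rw [h]
  exact (integrable_sq hvar).ofReal

lemma integral_mul_conj {μ : Measure ℂ} (hvar : (∫ w, ‖w‖ ^ 2 ∂μ) = 1) :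
    ∫ w, w * (starRingEnd ℂ) w ∂μ = 1 := by
  have h : (fun w : ℂ => w * (starRingEnd ℂ) w) = fun w : ℂ => ((‖w‖ ^ 2 : ℝ) : ℂ) := by
    funext w
    rw [Complex.mul_conj, Complex.normSq_eq_norm_sq]
  rw [h]
  exact (integral_ofReal (𝕜 := ℂ) (f := fun w => ‖w‖ ^ 2)).trans
    (by rw [hvar, RCLike.ofReal_one])

/-! ### Orthogonality of monomials -/

variable {n : ℕ}

noncomputable def gfun (G H : Finset (Fin n × Fin n)) (e : Fin n × Fin n) (z : ℂ) : ℂ :=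
  (if e ∈ G then z else 1) * (if e ∈ H then (starRingEnd ℂ) z else 1)

lemma prod_conj_prod_eq (G H : Finset (Fin n × Fin n)) (W : Fin n × Fin n → ℂ) :
    (∏ e ∈ G, W e) * (starRingEnd ℂ) (∏ e ∈ H, W e) = ∏ e, gfun G H e (W e) := by
  unfold gfun
  rw [Finset.prod_mul_distrib, Finset.prod_ite_mem, Finset.prod_ite_mem, univ_inter, univ_inter,
    map_prod]

variable {μ : Measure ℂ} [IsProbabilityMeasure μ]

lemma integrable_gfun (hvar : (∫ w, ‖w‖ ^ 2 ∂μ) = 1) (G H : Finset (Fin n × Fin n))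
    (e : Fin n × Fin n) : Integrable (gfun G H e) μ := by
  unfold gfun
  by_cases hG : e ∈ G <;> by_cases hH : e ∈ H <;> simp only [hG, hH, if_true, if_false,
    mul_one, one_mul]
  · exact integrable_mul_conj hvar
  · exact integrable_id' hvar
  · refine Integrable.mono' (integrable_id' hvar).norm
      (Complex.continuous_conj.measurable.aestronglyMeasurable) ?_
    exact Filter.Eventually.of_forall fun w => by simp
  · exact integrable_const 1

lemma integral_prod_conj_prod (hmean : (∫ w, w ∂μ) = 0)
    (hvar : (∫ w, ‖w‖ ^ 2 ∂μ) = 1) (G H : Finset (Fin n × Fin n)) :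
    ∫ W : Fin n × Fin n → ℂ, (∏ e ∈ G, W e) * (starRingEnd ℂ) (∏ e ∈ H, W e)
        ∂(Measure.pi fun _ : Fin n × Fin n => μ) = if G = H then 1 else 0 := by
  simp_rw [prod_conj_prod_eq]
  rw [pi_integral_prod]
  have key : ∀ e : Fin n × Fin n, ∫ z, gfun G H e z ∂μ =
      if (e ∈ G ↔ e ∈ H) then 1 else 0 := by
    intro e
    unfold gfun
    by_cases hG : e ∈ G <;> by_cases hH : e ∈ H <;>
      simp only [hG, hH, if_true, if_false, mul_one, one_mul, iff_true, iff_false,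
        not_true_eq_false, not_false_eq_true, iff_self]
    · exact integral_mul_conj hvar
    · exact hmean
    · rw [integral_conj, hmean, map_zero]
    · simp
  by_cases hGH : G = H
  · subst hGH
    rw [if_pos rfl]
    refine Finset.prod_eq_one fun e _ => ?_
    rw [key e, if_pos Iff.rfl]
  · rw [if_neg hGH]
    have hex : ∃ e, ¬(e ∈ G ↔ e ∈ H) := by
      by_contra hc
      push_neg at hc
      exact hGH (Finset.ext fun e => (hc e))
    obtain ⟨e, he⟩ := hex
    exact Finset.prod_eq_zero (mem_univ e) (by rw [key e, if_neg he])

lemma integrable_prod_conj_prod (hvar : (∫ w, ‖w‖ ^ 2 ∂μ) = 1)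
    (G H : Finset (Fin n × Fin n)) :
    Integrable (fun W : Fin n × Fin n → ℂ => (∏ e ∈ G, W e) * (starRingEnd ℂ) (∏ e ∈ H, W e))
      (Measure.pi fun _ : Fin n × Fin n => μ) := by
  have h : (fun W : Fin n × Fin n → ℂ => (∏ e ∈ G, W e) * (starRingEnd ℂ) (∏ e ∈ H, W e)) =
      fun W => ∏ e, gfun G H e (W e) := funext (prod_conj_prod_eq G H)
  rw [h]
  exact pi_integrable_prod μ _ (integrable_gfun hvar G H)

/-! ### Combinatorics -/

def graph (σ : Equiv.Perm (Fin n)) (S : Finset (Fin n)) : Finset (Fin n × Fin n) :=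
  S.image (fun i => (i, σ i))

lemma prod_graph (σ : Equiv.Perm (Fin n)) (S : Finset (Fin n)) (W : Fin n × Fin n → ℂ) :
    ∏ e ∈ graph σ S, W e = ∏ i ∈ S, W (i, σ i) :=
  Finset.prod_image (fun _ _ _ _ h => congrArg Prod.fst h)

lemma graph_eq_iff (σ τ : Equiv.Perm (Fin n)) (S T : Finset (Fin n)) :
    graph σ S = graph τ T ↔ (S = T ∧ ∀ i ∈ S, σ i = τ i) := by
  constructor
  · intro h
    have hST : S = T := by
      have h' := congrArg (Finset.image Prod.fst) h
      rw [graph, graph, Finset.image_image, Finset.image_image] at h'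
      simpa [Function.comp_def] using h'
    subst hST
    refine ⟨rfl, fun i hi => ?_⟩
    have hmem : (i, σ i) ∈ graph τ S := h ▸ (Finset.mem_image_of_mem _ hi)
    obtain ⟨j, _, hj⟩ := Finset.mem_image.1 hmem
    obtain ⟨h1, h2⟩ := Prod.mk_inj.1 hj
    rw [← h2, h1]
  · rintro ⟨rfl, hagree⟩
    exact Finset.image_congr fun i hi => by rw [hagree i hi]

lemma card_agree (σ : Equiv.Perm (Fin n)) (S : Finset (Fin n)) :
    (Finset.univ.filter fun τ : Equiv.Perm (Fin n) => ∀ i ∈ S, σ i = τ i).card =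
      (n - S.card).factorial := by
  classical
  have h1 : (Finset.univ.filter fun τ : Equiv.Perm (Fin n) => ∀ i ∈ S, σ i = τ i) =
      (Finset.univ.filter fun ρ : Equiv.Perm (Fin n) => ∀ i ∈ S, ρ i = i).image
        (fun ρ => σ * ρ) := by
    ext τ
    simp only [Finset.mem_filter, Finset.mem_image, Finset.mem_univ, true_and]
    constructor
    · intro h
      refine ⟨σ⁻¹ * τ, fun i hi => ?_, by group⟩
      simp [Equiv.Perm.mul_apply, ← h i hi]
    · rintro ⟨ρ, hρ, rfl⟩ i hi
      simp [Equiv.Perm.mul_apply, hρ i hi]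
  rw [h1, Finset.card_image_of_injective _ (mul_right_injective σ)]
  have h2 : (Finset.univ.filter fun ρ : Equiv.Perm (Fin n) => ∀ i ∈ S, ρ i = i).card =
      Fintype.card {ρ : Equiv.Perm (Fin n) // ∀ i, i ∈ S → ρ i = i} :=
    (Fintype.card_subtype _).symm
  rw [h2]
  have e1 : {ρ : Equiv.Perm (Fin n) // ∀ i, i ∈ S → ρ i = i} ≃
      {ρ : Equiv.Perm (Fin n) // ∀ i, ¬(i ∉ S) → ρ i = i} :=
    Equiv.subtypeEquivRight (by intro ρ; simp [not_not])
  have e2 := (Equiv.Perm.subtypeEquivSubtypePerm (fun i : Fin n => i ∉ S)).symm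
  have hcard : Fintype.card {ρ : Equiv.Perm (Fin n) // ∀ i, i ∈ S → ρ i = i} =
      Fintype.card (Equiv.Perm {i : Fin n // i ∉ S}) :=
    Fintype.card_congr (e1.trans e2)
  rw [hcard, Fintype.card_perm]
  congr 1
  rw [Fintype.card_subtype_compl, Fintype.card_fin]
  congr 1
  exact Fintype.card_coe S

lemma delta_eq (μ₀ : ℂ) (W : Fin n × Fin n → ℂ) :
    per (Matrix.of fun i j => W (i, j) + μ₀) - per (Matrix.of fun i j => W (i, j)) =
      ∑ σ : Equiv.Perm (Fin n), ∑ S ∈ Finset.univ.powerset.erase Finset.univ,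
        (∏ i ∈ S, W (i, σ i)) * μ₀ ^ (n - S.card) := by
  unfold per
  rw [← Finset.sum_sub_distrib]
  refine Finset.sum_congr rfl fun σ _ => ?_
  simp only [Matrix.of_apply]
  rw [Finset.prod_add]
  have hconst : ∀ S ∈ Finset.univ.powerset, (∏ i ∈ S, W (i, σ i)) * ∏ _i ∈ Finset.univ \ S, μ₀ =
      (∏ i ∈ S, W (i, σ i)) * μ₀ ^ (n - S.card) := by
    intro S hS
    rw [Finset.prod_const, Finset.card_sdiff_of_subset (Finset.mem_powerset.1 hS), Finset.card_univ,
      Fintype.card_fin]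
  rw [Finset.sum_congr rfl hconst]
  rw [← Finset.add_sum_erase _ _ (Finset.mem_powerset_self _)]
  simp [Finset.card_univ]

/-! ### The real sum bound -/

lemma geom_bound (n : ℕ) (c : ℝ) (hc0 : 0 < c) (hc1 : c < 1) :
    ∑ i ∈ range n, (c ^ 2) ^ i ≤ 1 / (1 - c ^ 2) := by
  have hlt : c ^ 2 < 1 := by nlinarith
  have hpos : 0 < 1 - c ^ 2 := by linarith
  rw [le_div_iff₀ hpos]
  have hgs := geom_sum_mul (c ^ 2) n
  have hnn : 0 ≤ (c ^ 2) ^ n := pow_nonneg (sq_nonneg c) n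
  nlinarith [hgs]

lemma powerset_sum (n : ℕ) (g : ℕ → ℝ) :
    ∑ S ∈ (Finset.univ : Finset (Fin n)).powerset, g S.card =
      ∑ k ∈ range (n + 1), (n.choose k : ℝ) * g k := by
  rw [Finset.powerset_card_disjiUnion]; erw [Finset.sum_disjiUnion]
  refine Finset.sum_congr (by rw [Finset.card_univ, Fintype.card_fin]) fun k _ => ?_
  rw [Finset.sum_congr rfl (fun S hS => by
    rw [(Finset.mem_powersetCard.1 hS).2]), Finset.sum_const, Finset.card_powersetCard,
    Finset.card_univ, Fintype.card_fin, nsmul_eq_mul]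

lemma real_sum_bound (n : ℕ) (hn : 1 ≤ n) (c : ℝ) (hc0 : 0 < c) (hc1 : c < 1) :
    (n.factorial : ℝ) * ∑ S ∈ (Finset.univ : Finset (Fin n)).powerset.erase Finset.univ,
      ((n - S.card).factorial : ℝ) * (c ^ 2 / n) ^ (n - S.card) ≤
      n.factorial * c ^ 2 / (1 - c ^ 2) := by
  have hnpos : (0 : ℝ) < n := by exact_mod_cast hn
  have hlt : c ^ 2 < 1 := by nlinarith
  have hpos : 0 < 1 - c ^ 2 := by linarith
  set g : ℕ → ℝ := fun k => ((n - k).factorial : ℝ) * (c ^ 2 / n) ^ (n - k) with hg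
  have h1 : ∑ S ∈ (Finset.univ : Finset (Fin n)).powerset.erase Finset.univ, g S.card =
      (∑ S ∈ (Finset.univ : Finset (Fin n)).powerset, g S.card) - g n := by
    rw [← Finset.add_sum_erase _ (fun S => g S.card) (Finset.mem_powerset_self _)]
    simp [Finset.card_univ]
  have hgn : g n = 1 := by simp [hg]
  rw [h1, hgn, powerset_sum]
  have h2 : ∑ k ∈ range (n + 1), (n.choose k : ℝ) * g k =
      ∑ m ∈ range (n + 1), ((n.descFactorial m : ℝ)) * (c ^ 2 / n) ^ m := by
    rw [← Finset.sum_range_reflect]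
    refine Finset.sum_congr rfl fun m hm => ?_
    have hm' : m ≤ n := Nat.lt_succ_iff.1 (Finset.mem_range.1 hm)
    have e1 : n + 1 - 1 - m = n - m := by omega
    have e2 : n - (n - m) = m := Nat.sub_sub_self hm'
    rw [e1, hg]
    simp only []
    rw [e2, Nat.choose_symm hm', Nat.descFactorial_eq_factorial_mul_choose]
    push_cast
    ring
  rw [h2, Finset.sum_range_succ']
  simp only [Nat.descFactorial_zero, pow_zero, Nat.cast_one, one_mul, add_sub_cancel_right]
  have h3 : ∑ i ∈ range n, ((n.descFactorial (i + 1) : ℝ)) * (c ^ 2 / n) ^ (i + 1) ≤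
      ∑ i ∈ range n, (c ^ 2) ^ (i + 1) := by
    refine Finset.sum_le_sum fun i _ => ?_
    have hd : (n.descFactorial (i + 1) : ℝ) ≤ (n : ℝ) ^ (i + 1) := by
      exact_mod_cast Nat.descFactorial_le_pow n (i + 1)
    have hnp : (0 : ℝ) < (n : ℝ) ^ (i + 1) := pow_pos hnpos _
    rw [div_pow, div_eq_mul_inv, ← mul_assoc]
    calc (n.descFactorial (i + 1) : ℝ) * (c ^ 2) ^ (i + 1) * ((n : ℝ) ^ (i + 1))⁻¹
        ≤ (n : ℝ) ^ (i + 1) * (c ^ 2) ^ (i + 1) * ((n : ℝ) ^ (i + 1))⁻¹ := by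
          have hnnn : 0 ≤ (c ^ 2) ^ (i + 1) * ((n : ℝ) ^ (i + 1))⁻¹ :=
            mul_nonneg (pow_nonneg (sq_nonneg c) _) (inv_nonneg.2 hnp.le)
          nlinarith [mul_le_mul_of_nonneg_right hd hnnn]
      _ = (c ^ 2) ^ (i + 1) := by field_simp
  have h4 : ∑ i ∈ range n, (c ^ 2) ^ (i + 1) ≤ c ^ 2 / (1 - c ^ 2) := by
    have hmul : ∑ i ∈ range n, (c ^ 2) ^ (i + 1) = c ^ 2 * ∑ i ∈ range n, (c ^ 2) ^ i := by
      rw [Finset.mul_sum]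
      exact Finset.sum_congr rfl fun i _ => by ring
    rw [hmul, div_eq_mul_one_div]
    exact mul_le_mul_of_nonneg_left (geom_bound n c hc0 hc1) (sq_nonneg c)
  have hfac : (0 : ℝ) ≤ n.factorial := Nat.cast_nonneg _
  calc (n.factorial : ℝ) * ∑ i ∈ range n, ((n.descFactorial (i + 1) : ℝ)) * (c ^ 2 / n) ^ (i + 1)
      ≤ (n.factorial : ℝ) * (c ^ 2 / (1 - c ^ 2)) :=
        mul_le_mul_of_nonneg_left (le_trans h3 h4) hfac
    _ = n.factorial * c ^ 2 / (1 - c ^ 2) := by ring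

end PermStabAux

/-- Let `n ≥ 1` and let `W` be an `n×n` random matrix with i.i.d. entries of a
law `μ` with mean `0` and second absolute moment `1`. Let `0 < c < 1` and `μ₀ ∈ ℂ` with
`|μ₀| = c/√n`. Then with `Δ := per(W + μ₀·J) − per(W)`, `E[|Δ|²] ≤ n!·c²/(1−c²)`. -/
theorem permanent_stability (n : ℕ) (hn : 1 ≤ n) (μ : Measure ℂ) [IsProbabilityMeasure μ]
    (hmean : (∫ w, w ∂μ) = 0) (hvar : (∫ w, ‖w‖ ^ 2 ∂μ) = 1)
    (c : ℝ) (hc0 : 0 < c) (hc1 : c < 1) (μ₀ : ℂ)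
    (hμ₀ : ‖μ₀‖ = c / Real.sqrt n) :
    (∫⁻ W : Fin n × Fin n → ℂ,
        ENNReal.ofReal
          (‖per (Matrix.of fun i j => W (i, j) + μ₀) -
                per (Matrix.of fun i j => W (i, j))‖ ^ 2)
      ∂(Measure.pi fun _ : Fin n × Fin n => μ)) ≤
      ENNReal.ofReal ((n.factorial : ℝ) * c ^ 2 / (1 - c ^ 2)) := by
  classical
  open PermStabAux Finset in
  set P : Measure (Fin n × Fin n → ℂ) := Measure.pi fun _ : Fin n × Fin n => μ with hP
  set Δ : (Fin n × Fin n → ℂ) → ℂ := fun W =>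
    per (Matrix.of fun i j => W (i, j) + μ₀) - per (Matrix.of fun i j => W (i, j)) with hΔdef
  set B : Finset (Finset (Fin n)) := Finset.univ.powerset.erase Finset.univ with hB
  set A : Finset (Equiv.Perm (Fin n) × Finset (Fin n)) := Finset.univ ×ˢ B with hA
  set r : ℝ := c ^ 2 / n with hr
  have hnpos : (0 : ℝ) < n := by exact_mod_cast hn
  have hns : Complex.normSq μ₀ = r := by
    rw [← Complex.sq_norm, hμ₀, div_pow, Real.sq_sqrt hnpos.le, hr]
  set Tm : (Equiv.Perm (Fin n) × Finset (Fin n)) → (Fin n × Fin n → ℂ) → ℂ :=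
    fun p W => ∏ i ∈ p.2, W (i, p.1 i) with hTm
  set coef : (Equiv.Perm (Fin n) × Finset (Fin n)) → ℂ := fun p => μ₀ ^ (n - p.2.card) with hcoef
  have hΔ : ∀ W, Δ W = ∑ p ∈ A, Tm p W * coef p := by
    intro W
    rw [hΔdef]
    simp only []
    rw [PermStabAux.delta_eq μ₀ W, hA, Finset.sum_product]
  have hsq : ∀ W, Δ W * (starRingEnd ℂ) (Δ W) =
      ∑ p ∈ A, ∑ q ∈ A,
        (Tm p W * (starRingEnd ℂ) (Tm q W)) * (coef p * (starRingEnd ℂ) (coef q)) := by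
    intro W
    rw [hΔ W, map_sum, Finset.sum_mul_sum]
    exact Finset.sum_congr rfl fun p _ => Finset.sum_congr rfl fun q _ => by
      rw [map_mul]; ring
  have hint : ∀ p q : Equiv.Perm (Fin n) × Finset (Fin n),
      Integrable (fun W => (Tm p W * (starRingEnd ℂ) (Tm q W)) *
        (coef p * (starRingEnd ℂ) (coef q))) P := by
    intro p q
    refine Integrable.mul_const ?_ _
    have h1 : (fun W : Fin n × Fin n → ℂ => Tm p W * (starRingEnd ℂ) (Tm q W)) =
        fun W => (∏ e ∈ graph p.1 p.2, W e) * (starRingEnd ℂ) (∏ e ∈ graph q.1 q.2, W e) := by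
      funext W
      rw [prod_graph, prod_graph]
    rw [h1]
    exact integrable_prod_conj_prod hvar _ _
  have hval : ∀ p ∈ A, ∀ q ∈ A,
      ∫ W, (Tm p W * (starRingEnd ℂ) (Tm q W)) * (coef p * (starRingEnd ℂ) (coef q)) ∂P =
        if (p.2 = q.2 ∧ ∀ i ∈ p.2, p.1 i = q.1 i) then ((r ^ (n - p.2.card) : ℝ) : ℂ) else 0 := by
    intro p _ q _
    rw [integral_mul_const]
    have h2 : ∫ W, Tm p W * (starRingEnd ℂ) (Tm q W) ∂P =
        if graph p.1 p.2 = graph q.1 q.2 then 1 else 0 := by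
      have h1 : (fun W : Fin n × Fin n → ℂ => Tm p W * (starRingEnd ℂ) (Tm q W)) =
          fun W => (∏ e ∈ graph p.1 p.2, W e) * (starRingEnd ℂ) (∏ e ∈ graph q.1 q.2, W e) := by
        funext W
        rw [prod_graph, prod_graph]
      rw [h1]
      exact integral_prod_conj_prod hmean hvar _ _
    rw [h2]
    by_cases hc : (p.2 = q.2 ∧ ∀ i ∈ p.2, p.1 i = q.1 i)
    · rw [if_pos ((graph_eq_iff p.1 q.1 p.2 q.2).2 hc), if_pos hc, one_mul]
      obtain ⟨h2eq, _⟩ := hc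
      rw [hcoef]
      simp only []
      rw [← h2eq, map_pow, ← mul_pow, Complex.mul_conj, hns, ← Complex.ofReal_pow]
    · rw [if_neg (fun hg => hc ((graph_eq_iff p.1 q.1 p.2 q.2).1 hg)), if_neg hc, zero_mul]
  -- the complex second moment
  have hE : ∫ W, Δ W * (starRingEnd ℂ) (Δ W) ∂P =
      ∑ p ∈ A, ∑ q ∈ A, (if (p.2 = q.2 ∧ ∀ i ∈ p.2, p.1 i = q.1 i)
        then ((r ^ (n - p.2.card) : ℝ) : ℂ) else 0) := by
    rw [show (fun W => Δ W * (starRingEnd ℂ) (Δ W)) = fun W => ∑ p ∈ A, ∑ q ∈ A,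
        (Tm p W * (starRingEnd ℂ) (Tm q W)) * (coef p * (starRingEnd ℂ) (coef q)) from
      funext hsq]
    rw [integral_finset_sum _ (fun p _ => integrable_finset_sum _ (fun q _ => hint p q))]
    refine Finset.sum_congr rfl fun p hp => ?_
    rw [integral_finset_sum _ (fun q _ => hint p q)]
    exact Finset.sum_congr rfl fun q hq => hval p hp q hq
  set R : ℝ := ∑ p ∈ A, ∑ q ∈ A, (if (p.2 = q.2 ∧ ∀ i ∈ p.2, p.1 i = q.1 i)
    then r ^ (n - p.2.card) else 0) with hRdef
  have hEc : ∫ W, Δ W * (starRingEnd ℂ) (Δ W) ∂P = (R : ℂ) := by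
    rw [hE, hRdef]
    push_cast [apply_ite (fun x : ℝ => (x : ℂ))]
    rfl
  -- integrability of |Δ|²
  have hInt : Integrable (fun W => Δ W * (starRingEnd ℂ) (Δ W)) P := by
    rw [show (fun W => Δ W * (starRingEnd ℂ) (Δ W)) = fun W => ∑ p ∈ A, ∑ q ∈ A,
        (Tm p W * (starRingEnd ℂ) (Tm q W)) * (coef p * (starRingEnd ℂ) (coef q)) from
      funext hsq]
    exact integrable_finset_sum _ fun p _ => integrable_finset_sum _ fun q _ => hint p q
  have habs : (fun W => ‖Δ W‖ ^ 2) =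
      fun W => RCLike.re (Δ W * (starRingEnd ℂ) (Δ W)) := by
    funext W
    rw [Complex.mul_conj]
    simp [Complex.normSq_eq_norm_sq, ← Complex.ofReal_pow]
  have hInt2 : Integrable (fun W => ‖Δ W‖ ^ 2) P := by
    rw [habs]
    exact hInt.re
  have hIR : ∫ W, ‖Δ W‖ ^ 2 ∂P = R := by
    rw [habs, integral_re hInt, hEc]
    simp
  have hL : ∫⁻ W, ENNReal.ofReal (‖Δ W‖ ^ 2) ∂P = ENNReal.ofReal R := by
    rw [← ofReal_integral_eq_lintegral_ofReal hInt2
      (Filter.Eventually.of_forall fun W => by positivity), hIR]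
  rw [hL]
  apply ENNReal.ofReal_le_ofReal
  -- evaluate R
  have hinner : ∀ p ∈ A, (∑ q ∈ A, if (p.2 = q.2 ∧ ∀ i ∈ p.2, p.1 i = q.1 i)
      then r ^ (n - p.2.card) else 0) = ((n - p.2.card).factorial : ℝ) * r ^ (n - p.2.card) := by
    intro p hp
    have hp2 : p.2 ∈ B := (Finset.mem_product.1 hp).2
    rw [hA, Finset.sum_product]
    have hTsum : ∀ τ : Equiv.Perm (Fin n),
        (∑ T ∈ B, if (p.2 = T ∧ ∀ i ∈ p.2, p.1 i = τ i) then r ^ (n - p.2.card) else 0) =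
          if (∀ i ∈ p.2, p.1 i = τ i) then r ^ (n - p.2.card) else 0 := by
      intro τ
      rw [Finset.sum_eq_single_of_mem p.2 hp2]
      · simp
      · intro T _ hne
        exact if_neg (fun hcond => hne hcond.1.symm)
    rw [Finset.sum_congr rfl (fun τ _ => hTsum τ)]
    rw [← Finset.sum_filter, Finset.sum_const, card_agree p.1 p.2, nsmul_eq_mul]
  have hR : R = (n.factorial : ℝ) *
      ∑ S ∈ B, ((n - S.card).factorial : ℝ) * r ^ (n - S.card) := by
    rw [hRdef, Finset.sum_congr rfl hinner, hA, Finset.sum_product]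
    simp only []
    rw [Finset.sum_const, nsmul_eq_mul, Finset.card_univ, Fintype.card_perm, Fintype.card_fin]
  rw [hR, hr, hB]
  exact real_sum_bound n hn c hc0 hc1
end

section
/- Let n ≥ 1, let μ be a probability measure on ℂ with ∫ w dμ(w) = 0, let z ∈ ℂ, and set u := −z/n. Assume the integrability condition ∫ exp(2·Re(u·w))·(1 + |w|²) dμ(w) < ∞. Define M := ∫ exp(2·Re(u·w)) dμ(w) (note M > 0), m₁ := (1/M)·∫ w·exp(2·Re(u·w)) dμ(w), and s := (1/M)·∫ |w − m₁|²·exp(2·Re(u·w)) dμ(w). Let W be an n×n random matrix with i.i.d. entries of law μ, and set X(z) := (1/n!)·per(J + z·W)·exp(−z·(1/n)·∑_{i,j} W_{ij}). Then, with A := |1 + z·m₁|² and B := |z|²·s, one has the exact identity E[|X(z)|²] = M^{n²} · ∑_{k=0}^{n} A^{n−k}·B^{k}/k!. -/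
open MeasureTheory

open Finset

set_option linter.unusedSectionVars false
set_option maxHeartbeats 1000000

section Comb
lemma card_perm_fixing (n : ℕ) (t : Finset (Fin n)) :
    (Finset.univ.filter (fun π : Equiv.Perm (Fin n) => ∀ i ∈ t, π i = i)).card
      = (n - t.card).factorial := by
  classical
  rw [← Fintype.card_subtype]
  have e1 : {π : Equiv.Perm (Fin n) // ∀ i ∈ t, π i = i}
      ≃ {f : Equiv.Perm (Fin n) // ∀ a, ¬(a ∉ t) → f a = a} :=
    Equiv.subtypeEquivRight (by intro f; simp [not_not])
  have e2 := (Equiv.Perm.subtypeEquivSubtypePerm (fun a : Fin n => a ∉ t)).symm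
  rw [Fintype.card_congr (e1.trans e2), Fintype.card_perm]
  congr 1
  rw [Fintype.card_subtype_compl, Fintype.card_fin, Fintype.card_coe]

lemma comb_sum (n : ℕ) (A B : ℝ) :
    ∑ π : Equiv.Perm (Fin n), ∏ i, (if π i = i then A + B else A)
      = ∑ k ∈ Finset.range (n + 1),
          ((n.choose k * (n - k).factorial : ℕ) : ℝ) * B ^ k * A ^ (n - k) := by
  classical
  have h1 : ∀ π : Equiv.Perm (Fin n),
      (∏ i, (if π i = i then A + B else A))
        = ∑ t ∈ (Finset.univ : Finset (Fin n)).powerset,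
            (if ∀ i ∈ t, π i = i then B ^ t.card else 0) * A ^ (n - t.card) := by
    intro π
    have : (∏ i, (if π i = i then A + B else A))
        = ∏ i : Fin n, ((if π i = i then B else 0) + A) := by
      apply Finset.prod_congr rfl; intro i _; split <;> ring
    rw [this, Finset.prod_add]
    apply Finset.sum_congr rfl
    intro t ht
    congr 1
    · by_cases h : ∀ i ∈ t, π i = i
      · rw [if_pos h]
        rw [Finset.prod_congr rfl (fun i hi => if_pos (h i hi)), Finset.prod_const]
      · rw [if_neg h]
        push_neg at h
        obtain ⟨i, hi, hne⟩ := h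
        exact Finset.prod_eq_zero hi (if_neg hne)
    · rw [Finset.prod_const]
      congr 1
      rw [Finset.card_sdiff_of_subset (Finset.mem_powerset.mp ht), Finset.card_univ, Fintype.card_fin]
  simp_rw [h1]
  rw [Finset.sum_comm]
  have h2 : ∀ t ∈ (Finset.univ : Finset (Fin n)).powerset,
      (∑ π : Equiv.Perm (Fin n),
        (if ∀ i ∈ t, π i = i then B ^ t.card else 0) * A ^ (n - t.card))
      = ((n - t.card).factorial : ℝ) * B ^ t.card * A ^ (n - t.card) := by
    intro t _
    simp_rw [ite_mul, zero_mul, ← Finset.sum_filter, Finset.sum_const, nsmul_eq_mul,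
      card_perm_fixing, mul_assoc]
  rw [Finset.sum_congr rfl h2]
  rw [Finset.sum_powerset]
  · rw [Finset.card_univ, Fintype.card_fin]
    apply Finset.sum_congr rfl
    intro k hk
    rw [Finset.sum_congr rfl (fun t ht => by
      rw [(Finset.mem_powersetCard.mp ht).2]), Finset.sum_const,
      Finset.card_powersetCard, Finset.card_univ, Fintype.card_fin, nsmul_eq_mul]
    push_cast
    ring

end Comb

section Anal
variable {μ : Measure ℂ} [IsProbabilityMeasure μ] {u z : ℂ}


lemma integrable_weighted
    (hint : Integrable (fun w => Real.exp (2 * (u * w).re) * (1 + ‖w‖ ^ 2)) μ)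
    {E : Type*} [NormedAddCommGroup E] [NormedSpace ℝ E] {f : ℂ → E} (hf : Continuous f)
    {C : ℝ} (hC : ∀ w, ‖f w‖ ≤ C * (1 + ‖w‖ ^ 2)) :
    Integrable (fun w => Real.exp (2 * (u * w).re) • f w) μ := by
  apply Integrable.mono' (hint.const_mul C)
  · exact (Continuous.smul (by fun_prop) hf).aestronglyMeasurable
  · filter_upwards with w
    rw [norm_smul, Real.norm_eq_abs, abs_of_pos (Real.exp_pos _)]
    calc Real.exp (2 * (u * w).re) * ‖f w‖
        ≤ Real.exp (2 * (u * w).re) * (C * (1 + ‖w‖ ^ 2)) := by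
          apply mul_le_mul_of_nonneg_left (hC w) (Real.exp_pos _).le
      _ = C * (Real.exp (2 * (u * w).re) * (1 + ‖w‖ ^ 2)) := by ring

lemma cont_e : Continuous (fun w : ℂ => Real.exp (2 * (u * w).re)) := by fun_prop

lemma integrable_e
    (hint : Integrable (fun w => Real.exp (2 * (u * w).re) * (1 + ‖w‖ ^ 2)) μ) :
    Integrable (fun w => Real.exp (2 * (u * w).re)) μ := by
  have := integrable_weighted (μ := μ) hint (f := fun _ => (1:ℝ)) continuous_const
    (C := 1) (fun w => by rw [norm_one, one_mul]; nlinarith [sq_nonneg (‖w‖)])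
  simpa using this

lemma M_pos
    (hint : Integrable (fun w => Real.exp (2 * (u * w).re) * (1 + ‖w‖ ^ 2)) μ) :
    0 < ∫ w, Real.exp (2 * (u * w).re) ∂μ :=
  integral_exp_pos (integrable_e hint)

lemma integrable_ew
    (hint : Integrable (fun w => Real.exp (2 * (u * w).re) * (1 + ‖w‖ ^ 2)) μ) :
    Integrable (fun w => Real.exp (2 * (u * w).re) • w) μ := by
  apply integrable_weighted hint continuous_id (C := 1)
  intro w
  have h := norm_nonneg w
  simp only [one_mul, id]
  nlinarith [sq_nonneg (‖w‖ - 1)]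

lemma integrable_ewm
    (hint : Integrable (fun w => Real.exp (2 * (u * w).re) * (1 + ‖w‖ ^ 2)) μ)
    (m₁ : ℂ) :
    Integrable (fun w => Real.exp (2 * (u * w).re) • (w - m₁)) μ := by
  apply integrable_weighted hint (by fun_prop) (C := 1 + ‖m₁‖)
  intro w
  have h1 : ‖w - m₁‖ ≤ ‖w‖ + ‖m₁‖ := norm_sub_le _ _
  have h := norm_nonneg w
  have h' := norm_nonneg m₁
  nlinarith [sq_nonneg (‖w‖ - 1)]

lemma integral_ew_eq
    (hint : Integrable (fun w => Real.exp (2 * (u * w).re) * (1 + ‖w‖ ^ 2)) μ) :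
    (∫ w, Real.exp (2 * (u * w).re) • w ∂μ)
      = (∫ w, Real.exp (2 * (u * w).re) ∂μ : ℝ)
        • ((∫ w, Real.exp (2 * (u * w).re) ∂μ : ℝ)⁻¹
          • ∫ w, Real.exp (2 * (u * w).re) • w ∂μ) := by
  rw [smul_smul, mul_inv_cancel₀ (M_pos hint).ne', one_smul]

lemma integral_ewm_zero
    (hint : Integrable (fun w => Real.exp (2 * (u * w).re) * (1 + ‖w‖ ^ 2)) μ) :
    (∫ w, Real.exp (2 * (u * w).re)
        • (w - (∫ w, Real.exp (2 * (u * w).re) ∂μ : ℝ)⁻¹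
          • ∫ w, Real.exp (2 * (u * w).re) • w ∂μ) ∂μ) = 0 := by
  set m₁ := (∫ w, Real.exp (2 * (u * w).re) ∂μ : ℝ)⁻¹ • ∫ w, Real.exp (2 * (u * w).re) • w ∂μ
  have : (fun w : ℂ => Real.exp (2 * (u * w).re) • (w - m₁))
      = fun w => Real.exp (2 * (u * w).re) • w - Real.exp (2 * (u * w).re) • m₁ := by
    funext w; rw [smul_sub]
  rw [this, integral_sub (integrable_ew hint) ((integrable_e hint).smul_const m₁),
    integral_smul_const, integral_ew_eq hint, sub_self]

lemma integral_lin
    (hint : Integrable (fun w => Real.exp (2 * (u * w).re) * (1 + ‖w‖ ^ 2)) μ)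
    {M : ℝ} {m₁ : ℂ} (hM : M = ∫ w, Real.exp (2 * (u * w).re) ∂μ)
    (hm : m₁ = (M⁻¹ : ℝ) • ∫ w, Real.exp (2 * (u * w).re) • w ∂μ) :
    (∫ w, Real.exp (2 * (u * w).re) • (1 + z * w) ∂μ) = (M : ℂ) * (1 + z * m₁) := by
  have hM0 : M ≠ 0 := by rw [hM]; exact (M_pos hint).ne'
  have h1 : (fun w : ℂ => Real.exp (2 * (u * w).re) • (1 + z * w))
      = fun w => (Real.exp (2 * (u * w).re) : ℂ) + z * (Real.exp (2 * (u * w).re) • w) := by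
    funext w
    rw [smul_add, mul_smul_comm, Complex.real_smul, mul_one]
  have hi1 : Integrable (fun w : ℂ => (Real.exp (2 * (u * w).re) : ℂ)) μ :=
    (integrable_e hint).ofReal
  have hio : (∫ w, (Real.exp (2 * (u * w).re) : ℂ) ∂μ)
      = ((∫ w, Real.exp (2 * (u * w).re) ∂μ : ℝ) : ℂ) := integral_ofReal
  rw [h1, integral_add hi1 ((integrable_ew hint).const_mul z), hio, integral_const_mul, ← hM]
  set I := ∫ w, Real.exp (2 * (u * w).re) • w ∂μ
  rw [hm, Complex.real_smul, Complex.ofReal_inv]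
  have hMC : (M : ℂ) ≠ 0 := Complex.ofReal_ne_zero.mpr hM0
  field_simp

lemma integral_conj_lin
    (hint : Integrable (fun w => Real.exp (2 * (u * w).re) * (1 + ‖w‖ ^ 2)) μ)
    {M : ℝ} {m₁ : ℂ} (hM : M = ∫ w, Real.exp (2 * (u * w).re) ∂μ)
    (hm : m₁ = (M⁻¹ : ℝ) • ∫ w, Real.exp (2 * (u * w).re) • w ∂μ) :
    (∫ w, Real.exp (2 * (u * w).re) • (starRingEnd ℂ) (1 + z * w) ∂μ)
      = (M : ℂ) * (starRingEnd ℂ) (1 + z * m₁) := by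
  have h1 : (fun w : ℂ => Real.exp (2 * (u * w).re) • (starRingEnd ℂ) (1 + z * w))
      = fun w => (starRingEnd ℂ) (Real.exp (2 * (u * w).re) • (1 + z * w)) := by
    funext w
    rw [Complex.real_smul, Complex.real_smul, map_mul, Complex.conj_ofReal]
  rw [h1, integral_conj, integral_lin hint hM hm, map_mul, Complex.conj_ofReal]

lemma integrable_q
    (hint : Integrable (fun w => Real.exp (2 * (u * w).re) * (1 + ‖w‖ ^ 2)) μ)
    (m₁ : ℂ) :
    Integrable (fun w => ‖w - m₁‖ ^ 2 * Real.exp (2 * (u * w).re)) μ := by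
  have := integrable_weighted (μ := μ) hint (f := fun w => ‖w - m₁‖ ^ 2)
    ((continuous_norm.comp (continuous_id.sub continuous_const)).pow 2)
    (C := 2 * (1 + ‖m₁‖ ^ 2)) ?_
  · simpa [smul_eq_mul, mul_comm] using this
  · intro w
    have h1 : ‖w - m₁‖ ≤ ‖w‖ + ‖m₁‖ := norm_sub_le _ _
    have h := norm_nonneg w
    have h' := norm_nonneg m₁
    have h'' := norm_nonneg (w - m₁)
    show ‖‖w - m₁‖ ^ 2‖ ≤ _
    rw [Real.norm_eq_abs, abs_of_nonneg (by positivity)]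
    nlinarith [sq_nonneg (‖w‖ - ‖m₁‖),
      mul_self_le_mul_self h'' h1]

lemma integral_quad
    (hint : Integrable (fun w => Real.exp (2 * (u * w).re) * (1 + ‖w‖ ^ 2)) μ)
    {M : ℝ} {m₁ : ℂ} (hM : M = ∫ w, Real.exp (2 * (u * w).re) ∂μ)
    (hm : m₁ = (M⁻¹ : ℝ) • ∫ w, Real.exp (2 * (u * w).re) • w ∂μ) :
    (∫ w, Real.exp (2 * (u * w).re) • ((1 + z * w) * (starRingEnd ℂ) (1 + z * w)) ∂μ)
      = ((M * (‖1 + z * m₁‖ ^ 2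
          + ‖z‖ ^ 2 * (M⁻¹ * ∫ w, ‖w - m₁‖ ^ 2
              * Real.exp (2 * (u * w).re) ∂μ)) : ℝ) : ℂ) := by
  have hM0 : M ≠ 0 := by rw [hM]; exact (M_pos hint).ne'
  set a : ℂ := 1 + z * m₁ with ha
  set c : ℂ := a * (starRingEnd ℂ) z with hc
  -- pointwise complex → real
  have h1 : (fun w : ℂ => Real.exp (2 * (u * w).re) • ((1 + z * w) * (starRingEnd ℂ) (1 + z * w)))
      = fun w => ((Real.exp (2 * (u * w).re) * Complex.normSq (1 + z * w) : ℝ) : ℂ) := by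
    funext w
    rw [Complex.mul_conj, Complex.real_smul, Complex.ofReal_mul]
  rw [h1]
  have hio : (∫ w, ((Real.exp (2 * (u * w).re) * Complex.normSq (1 + z * w) : ℝ) : ℂ) ∂μ)
      = ((∫ w, Real.exp (2 * (u * w).re) * Complex.normSq (1 + z * w) ∂μ : ℝ) : ℂ) :=
    integral_ofReal
  rw [hio]
  congr 1
  -- real computation
  have key : ∀ w : ℂ, Real.exp (2 * (u * w).re) * Complex.normSq (1 + z * w)
      = Complex.normSq a * Real.exp (2 * (u * w).re)
        + Complex.normSq z * (‖w - m₁‖ ^ 2 * Real.exp (2 * (u * w).re))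
        + 2 * ((starRingEnd ℂ) c * (Real.exp (2 * (u * w).re) • (w - m₁))).re := by
    intro w
    have hw : (1 : ℂ) + z * w = a + z * (w - m₁) := by rw [ha]; ring
    rw [hw, Complex.normSq_add, Complex.sq_norm, map_mul]
    have h2 : ((starRingEnd ℂ) c * (Real.exp (2 * (u * w).re) • (w - m₁))).re
        = Real.exp (2 * (u * w).re) * (a * (starRingEnd ℂ) (z * (w - m₁))).re := by
      rw [Complex.real_smul]
      have e1 : (starRingEnd ℂ) c * ((Real.exp (2 * (u * w).re) : ℝ) * (w - m₁))
          = (Real.exp (2 * (u * w).re) : ℝ) * ((starRingEnd ℂ) c * (w - m₁)) := by ring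
      rw [e1, Complex.re_ofReal_mul]
      congr 1
      have e2 : a * (starRingEnd ℂ) (z * (w - m₁))
          = (starRingEnd ℂ) ((starRingEnd ℂ) c * (w - m₁)) := by
        rw [hc]; simp only [map_mul, Complex.conj_conj]; ring
      rw [e2, Complex.conj_re]
    rw [h2]
    ring
  rw [show (fun w : ℂ => Real.exp (2 * (u * w).re) * Complex.normSq (1 + z * w))
      = _ from funext key]
  have hi1 : Integrable (fun w : ℂ =>
      Complex.normSq a * Real.exp (2 * (u * w).re)) μ := (integrable_e hint).const_mul _
  have hi2 : Integrable (fun w : ℂ => Complex.normSq z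
      * (‖w - m₁‖ ^ 2 * Real.exp (2 * (u * w).re))) μ :=
    (integrable_q hint m₁).const_mul _
  have hig : Integrable (fun w : ℂ =>
      (starRingEnd ℂ) c * (Real.exp (2 * (u * w).re) • (w - m₁))) μ :=
    (integrable_ewm hint m₁).const_mul _
  have hi3 : Integrable (fun w : ℂ =>
      2 * ((starRingEnd ℂ) c * (Real.exp (2 * (u * w).re) • (w - m₁))).re) μ :=
    hig.re.const_mul 2
  have hi12 : Integrable (fun w : ℂ => Complex.normSq a * Real.exp (2 * (u * w).re)
      + Complex.normSq z * (‖w - m₁‖ ^ 2 * Real.exp (2 * (u * w).re))) μ :=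
    hi1.add hi2
  rw [integral_add hi12 hi3, integral_add hi1 hi2, integral_const_mul,
    integral_const_mul, integral_const_mul]
  have h3 : (∫ w, ((starRingEnd ℂ) c * (Real.exp (2 * (u * w).re) • (w - m₁))).re ∂μ) = 0 := by
    have hre : (∫ w, ((starRingEnd ℂ) c * (Real.exp (2 * (u * w).re) • (w - m₁))).re ∂μ)
        = (∫ w, (starRingEnd ℂ) c * (Real.exp (2 * (u * w).re) • (w - m₁)) ∂μ).re :=
      integral_re hig
    have h0 : (∫ w, Real.exp (2 * (u * w).re) • (w - m₁) ∂μ) = 0 := by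
      rw [hm, hM]; exact integral_ewm_zero hint
    rw [hre, integral_const_mul, h0, mul_zero, Complex.zero_re]
  rw [h3, ← hM, mul_zero, add_zero, Complex.sq_norm, Complex.sq_norm]
  field_simp
  simp only [mul_comm _ u]

end Anal

noncomputable def Gfun (u z : ℂ) (c₁ c₂ : Prop) [Decidable c₁] [Decidable c₂] (w : ℂ) : ℂ :=
  Real.exp (2 * (u * w).re)
    • ((if c₁ then 1 + z * w else 1) * (starRingEnd ℂ) (if c₂ then 1 + z * w else 1))

section G
variable {μ : Measure ℂ} [IsProbabilityMeasure μ] {u z : ℂ}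

lemma integrable_G
    (hint : Integrable (fun w => Real.exp (2 * (u * w).re) * (1 + ‖w‖ ^ 2)) μ)
    (c₁ c₂ : Prop) [Decidable c₁] [Decidable c₂] :
    Integrable (fun w => Gfun u z c₁ c₂ w) μ := by
  apply integrable_weighted hint (f := fun w =>
      (if c₁ then 1 + z * w else 1) * (starRingEnd ℂ) (if c₂ then 1 + z * w else 1))
    (by
      have hc2 : Continuous fun w : ℂ => (starRingEnd ℂ) (if c₂ then 1 + z * w else 1) := by
        apply Complex.continuous_conj.comp
        by_cases h2 : c₂ <;> simp only [h2, if_true, if_false] <;> fun_prop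
      have hc1 : Continuous fun w : ℂ => (if c₁ then 1 + z * w else 1 : ℂ) := by
        by_cases h1 : c₁ <;> simp only [h1, if_true, if_false] <;> fun_prop
      exact hc1.mul hc2)
    (C := 2 * (1 + ‖z‖ ^ 2))
  intro w
  have hb : ∀ c : Prop, ∀ _ : Decidable c,
      ‖(if c then 1 + z * w else 1 : ℂ)‖ ≤ 1 + ‖z‖ * ‖w‖ := by
    intro c _
    split
    · calc ‖(1 : ℂ) + z * w‖ ≤ ‖(1:ℂ)‖ + ‖z * w‖ := norm_add_le _ _
        _ = 1 + ‖z‖ * ‖w‖ := by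
            simp [map_mul]
    · simp only [norm_one]
      nlinarith [mul_nonneg (norm_nonneg z) (norm_nonneg w)]
  have h1 := hb c₁ inferInstance
  have h2 := hb c₂ inferInstance
  rw [norm_mul]
  have hconj : ‖(starRingEnd ℂ) (if c₂ then 1 + z * w else 1)‖
      = ‖(if c₂ then 1 + z * w else 1 : ℂ)‖ := norm_star _
  rw [hconj]
  have hz := norm_nonneg z
  have hw := norm_nonneg w
  have hn1 : (0:ℝ) ≤ ‖(if c₁ then 1 + z * w else 1 : ℂ)‖ := norm_nonneg _
  have hn2 : (0:ℝ) ≤ ‖(if c₂ then 1 + z * w else 1 : ℂ)‖ := norm_nonneg _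
  calc ‖(if c₁ then 1 + z * w else 1 : ℂ)‖ * ‖(if c₂ then 1 + z * w else 1 : ℂ)‖
      ≤ (1 + ‖z‖ * ‖w‖) * (1 + ‖z‖ * ‖w‖) :=
        mul_le_mul h1 h2 hn2 (by positivity)
    _ ≤ 2 * (1 + ‖z‖ ^ 2) * (1 + ‖w‖ ^ 2) := by
        nlinarith [sq_nonneg (‖z‖ * ‖w‖ - 1),
          sq_nonneg (‖z‖ - ‖w‖)]

lemma integral_G
    (hint : Integrable (fun w => Real.exp (2 * (u * w).re) * (1 + ‖w‖ ^ 2)) μ)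
    {M : ℝ} {m₁ : ℂ} {s A B : ℝ} (hM : M = ∫ w, Real.exp (2 * (u * w).re) ∂μ)
    (hm : m₁ = (M⁻¹ : ℝ) • ∫ w, Real.exp (2 * (u * w).re) • w ∂μ)
    (hs : s = M⁻¹ * ∫ w, ‖w - m₁‖ ^ 2 * Real.exp (2 * (u * w).re) ∂μ)
    (hA : A = ‖1 + z * m₁‖ ^ 2) (hB : B = ‖z‖ ^ 2 * s)
    (c₁ c₂ : Prop) [Decidable c₁] [Decidable c₂] :
    (∫ w, Gfun u z c₁ c₂ w ∂μ)
      = (M : ℂ) * (if c₁ then (if c₂ then ((A + B : ℝ) : ℂ) else 1 + z * m₁)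
          else (if c₂ then (starRingEnd ℂ) (1 + z * m₁) else 1)) := by
  unfold Gfun
  by_cases h1 : c₁ <;> by_cases h2 : c₂ <;> simp only [h1, h2, if_true, if_false]
  · rw [integral_quad hint hM hm, ← hs, ← hA, ← hB, Complex.ofReal_mul]
  · rw [show (fun w : ℂ => Real.exp (2 * (u * w).re)
        • ((1 + z * w) * (starRingEnd ℂ) 1)) = fun w : ℂ =>
          Real.exp (2 * (u * w).re) • (1 + z * w) from funext fun w => by
            rw [map_one, mul_one]]
    exact integral_lin hint hM hm
  · rw [show (fun w : ℂ => Real.exp (2 * (u * w).re)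
        • ((1 : ℂ) * (starRingEnd ℂ) (1 + z * w))) = fun w : ℂ =>
          Real.exp (2 * (u * w).re) • (starRingEnd ℂ) (1 + z * w) from funext fun w => by
            rw [one_mul]]
    exact integral_conj_lin hint hM hm
  · rw [show (fun w : ℂ => Real.exp (2 * (u * w).re)
        • ((1 : ℂ) * (starRingEnd ℂ) 1)) = fun w : ℂ =>
          ((Real.exp (2 * (u * w).re) : ℝ) : ℂ) from funext fun w => by
            rw [map_one, one_mul, Complex.real_smul, mul_one]]
    have hio : (∫ w, ((Real.exp (2 * (u * w).re) : ℝ) : ℂ) ∂μ)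
        = ((∫ w, Real.exp (2 * (u * w).re) ∂μ : ℝ) : ℂ) := integral_ofReal
    rw [hio, ← hM, mul_one]

end G

lemma pi_integral_prod {ι : Type*} [Fintype ι] (μ : Measure ℂ) [IsProbabilityMeasure μ]
    (f : ι → ℂ → ℂ) :
    (∫ x : ι → ℂ, ∏ i, f i (x i) ∂(Measure.pi fun _ : ι => μ)) = ∏ i, ∫ w, f i w ∂μ := by
  letI : MeasureSpace ℂ := ⟨μ⟩
  haveI : SigmaFinite (volume : Measure ℂ) := inferInstanceAs (SigmaFinite μ)
  have hv : (Measure.pi fun _ : ι => μ) = (volume : Measure (ι → ℂ)) := volume_pi.symm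
  rw [hv]
  exact integral_fintype_prod_eq_prod (fun i => f i)

lemma pi_integrable_prod {ι : Type*} [Fintype ι] (μ : Measure ℂ) [IsProbabilityMeasure μ]
    (f : ι → ℂ → ℂ) (hf : ∀ i, Integrable (f i) μ) :
    Integrable (fun x : ι → ℂ => ∏ i, f i (x i)) (Measure.pi fun _ : ι => μ) := by
  letI : MeasureSpace ℂ := ⟨μ⟩
  haveI : SigmaFinite (volume : Measure ℂ) := inferInstanceAs (SigmaFinite μ)
  have hv : (Measure.pi fun _ : ι => μ) = (volume : Measure (ι → ℂ)) := volume_pi.symm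
  rw [hv]
  exact Integrable.fintype_prod hf


lemma perm_prod_eq (n : ℕ) (z : ℂ) (σ : Equiv.Perm (Fin n)) (W : Fin n × Fin n → ℂ) :
    (∏ i : Fin n, (1 + z * W (i, σ i)))
      = ∏ p : Fin n × Fin n, (if p.2 = σ p.1 then 1 + z * W p else 1) := by
  rw [Fintype.prod_prod_type]
  apply Finset.prod_congr rfl
  intro i _
  rw [Finset.prod_ite_eq' Finset.univ (σ i) (fun j => 1 + z * W (i, j)),
    if_pos (Finset.mem_univ _)]

lemma exp_mul_conj (n : ℕ) (z : ℂ) (W : Fin n × Fin n → ℂ) :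
    Complex.exp (-(z * ((1 / (n : ℂ)) * ∑ p : Fin n × Fin n, W p)))
      * (starRingEnd ℂ) (Complex.exp (-(z * ((1 / (n : ℂ)) * ∑ p : Fin n × Fin n, W p))))
      = ∏ p : Fin n × Fin n, ((Real.exp (2 * ((-z / (n : ℂ)) * W p).re) : ℝ) : ℂ) := by
  have hc : -(z * ((1 / (n : ℂ)) * ∑ p : Fin n × Fin n, W p))
      = ∑ p : Fin n × Fin n, (-z / (n : ℂ)) * W p := by
    rw [← Finset.mul_sum]
    ring
  rw [hc, ← Complex.exp_conj, ← Complex.exp_add, Complex.add_conj, ← Complex.ofReal_exp]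
  have hre : (∑ p : Fin n × Fin n, (-z / (n : ℂ)) * W p).re
      = ∑ p : Fin n × Fin n, ((-z / (n : ℂ)) * W p).re := Complex.re_sum _ _
  rw [hre, Finset.mul_sum, Real.exp_sum, Complex.ofReal_prod]

lemma pointwise_expand (n : ℕ) (z : ℂ) (W : Fin n × Fin n → ℂ) :
    ((1 / (n.factorial : ℂ)) * per (Matrix.of fun i j => 1 + z * W (i, j)) *
        Complex.exp (-(z * ((1 / (n : ℂ)) * ∑ p : Fin n × Fin n, W p))))
      * (starRingEnd ℂ) ((1 / (n.factorial : ℂ)) * per (Matrix.of fun i j => 1 + z * W (i, j)) *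
        Complex.exp (-(z * ((1 / (n : ℂ)) * ∑ p : Fin n × Fin n, W p))))
      = (1 / (n.factorial : ℂ)) * (1 / (n.factorial : ℂ)) *
          ∑ σ : Equiv.Perm (Fin n), ∑ τ : Equiv.Perm (Fin n),
            ∏ p : Fin n × Fin n, Gfun (-z / (n : ℂ)) z (p.2 = σ p.1) (p.2 = τ p.1) (W p) := by
  have hper : per (Matrix.of fun i j => 1 + z * W (i, j))
      = ∑ σ : Equiv.Perm (Fin n),
          ∏ p : Fin n × Fin n, (if p.2 = σ p.1 then 1 + z * W p else 1) := by
    unfold per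
    exact Finset.sum_congr rfl fun σ _ => perm_prod_eq n z σ W
  have hconj1 : (starRingEnd ℂ) (1 / (n.factorial : ℂ)) = 1 / (n.factorial : ℂ) := by
    simp
  rw [map_mul, map_mul, hconj1, hper, map_sum]
  have hconjP : ∀ τ : Equiv.Perm (Fin n),
      (starRingEnd ℂ) (∏ p : Fin n × Fin n, (if p.2 = τ p.1 then 1 + z * W p else 1))
        = ∏ p : Fin n × Fin n, (starRingEnd ℂ) (if p.2 = τ p.1 then 1 + z * W p else 1) :=
    fun τ => map_prod _ _ _
  rw [Finset.sum_congr rfl fun τ _ => hconjP τ]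
  have key : (∑ σ : Equiv.Perm (Fin n),
        ∏ p : Fin n × Fin n, (if p.2 = σ p.1 then 1 + z * W p else 1))
      * (∑ τ : Equiv.Perm (Fin n),
        ∏ p : Fin n × Fin n, (starRingEnd ℂ) (if p.2 = τ p.1 then 1 + z * W p else 1))
      * (Complex.exp (-(z * ((1 / (n : ℂ)) * ∑ p : Fin n × Fin n, W p)))
        * (starRingEnd ℂ) (Complex.exp (-(z * ((1 / (n : ℂ)) * ∑ p : Fin n × Fin n, W p)))))
      = ∑ σ : Equiv.Perm (Fin n), ∑ τ : Equiv.Perm (Fin n),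
          ∏ p : Fin n × Fin n, Gfun (-z / (n : ℂ)) z (p.2 = σ p.1) (p.2 = τ p.1) (W p) := by
    rw [exp_mul_conj, Finset.sum_mul_sum, Finset.sum_mul]
    apply Finset.sum_congr rfl
    intro σ _
    rw [Finset.sum_mul]
    apply Finset.sum_congr rfl
    intro τ _
    rw [← Finset.prod_mul_distrib, ← Finset.prod_mul_distrib]
    apply Finset.prod_congr rfl
    intro p _
    unfold Gfun
    rw [Complex.real_smul]
    ring
  calc _ = ((1 / (n.factorial : ℂ)) * (1 / (n.factorial : ℂ)))
        * ((∑ σ : Equiv.Perm (Fin n),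
            ∏ p : Fin n × Fin n, (if p.2 = σ p.1 then 1 + z * W p else 1))
          * (∑ τ : Equiv.Perm (Fin n),
            ∏ p : Fin n × Fin n, (starRingEnd ℂ) (if p.2 = τ p.1 then 1 + z * W p else 1))
          * (Complex.exp (-(z * ((1 / (n : ℂ)) * ∑ p : Fin n × Fin n, W p)))
            * (starRingEnd ℂ) (Complex.exp (-(z * ((1 / (n : ℂ)) * ∑ p, W p)))))) := by ring
    _ = _ := by rw [key]

lemma term_prod (n : ℕ) (σ τ : Equiv.Perm (Fin n)) (Mc : ℂ) (A B : ℝ) (a : ℂ)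
    (haA : a * (starRingEnd ℂ) a = ((A : ℝ) : ℂ)) :
    (∏ p : Fin n × Fin n, (Mc * (if p.2 = σ p.1 then
        (if p.2 = τ p.1 then ((A + B : ℝ) : ℂ) else a)
        else (if p.2 = τ p.1 then (starRingEnd ℂ) a else 1))))
      = Mc ^ (n ^ 2) * ((∏ i : Fin n, (if σ i = τ i then A + B else A) : ℝ) : ℂ) := by
  rw [Finset.prod_mul_distrib, Finset.prod_const, Finset.card_univ, Fintype.card_prod,
    Fintype.card_fin, ← pow_two]
  congr 1
  rw [Complex.ofReal_prod, Fintype.prod_prod_type]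
  apply Finset.prod_congr rfl
  intro i _
  by_cases h : σ i = τ i
  · have h1 : (∏ j : Fin n, (if j = σ i then
        (if j = τ i then ((A + B : ℝ) : ℂ) else a)
        else (if j = τ i then (starRingEnd ℂ) a else 1)))
        = ∏ j : Fin n, (if j = σ i then ((A + B : ℝ) : ℂ) else 1) := by
      apply Finset.prod_congr rfl
      intro j _
      by_cases hj : j = σ i
      · rw [if_pos hj, if_pos hj, if_pos (h ▸ hj)]
      · rw [if_neg hj, if_neg hj, if_neg (h ▸ hj)]
    rw [h1, Finset.prod_ite_eq' Finset.univ (σ i) (fun _ => ((A + B : ℝ) : ℂ)),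
      if_pos (Finset.mem_univ _), if_pos h]
  · have h1 : (∏ j : Fin n, (if j = σ i then
        (if j = τ i then ((A + B : ℝ) : ℂ) else a)
        else (if j = τ i then (starRingEnd ℂ) a else 1)))
        = ∏ j : Fin n, ((if j = σ i then a else 1) * (if j = τ i then (starRingEnd ℂ) a else 1)) := by
      apply Finset.prod_congr rfl
      intro j _
      by_cases hj : j = σ i
      · have hj' : j ≠ τ i := fun hh => h (hj ▸ hh ▸ rfl)
        rw [if_pos hj, if_pos hj, if_neg hj', if_neg hj', mul_one]
      · rw [if_neg hj, if_neg hj, one_mul]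
    rw [h1, Finset.prod_mul_distrib,
      Finset.prod_ite_eq' Finset.univ (σ i) (fun _ => a),
      Finset.prod_ite_eq' Finset.univ (τ i) (fun _ => (starRingEnd ℂ) a),
      if_pos (Finset.mem_univ _), if_pos (Finset.mem_univ _), haA, if_neg h]

lemma sum_reindex (n : ℕ) (A B : ℝ) :
    (∑ σ : Equiv.Perm (Fin n), ∑ τ : Equiv.Perm (Fin n),
        (∏ i : Fin n, (if σ i = τ i then A + B else A)))
      = (n.factorial : ℝ) * ∑ π : Equiv.Perm (Fin n),
          ∏ i : Fin n, (if π i = i then A + B else A) := by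
  have inner : ∀ σ : Equiv.Perm (Fin n),
      (∑ τ : Equiv.Perm (Fin n), ∏ i : Fin n, (if σ i = τ i then A + B else A))
        = ∑ π : Equiv.Perm (Fin n), ∏ i : Fin n, (if π i = i then A + B else A) := by
    intro σ
    rw [← Equiv.sum_comp (Equiv.mulLeft σ)
      (fun τ => ∏ i : Fin n, (if σ i = τ i then A + B else A))]
    apply Finset.sum_congr rfl
    intro π _
    apply Finset.prod_congr rfl
    intro i _
    have : (Equiv.mulLeft σ π) i = σ (π i) := rfl
    rw [this]
    by_cases h : π i = i
    · rw [if_pos (by rw [h]), if_pos h]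
    · rw [if_neg (fun hh => h (σ.injective hh.symm)), if_neg h]
  rw [Finset.sum_congr rfl fun σ _ => inner σ, Finset.sum_const, Finset.card_univ,
    Fintype.card_perm, Fintype.card_fin, nsmul_eq_mul]


/-- Let `μ` be a probability measure on `ℂ` with mean `0`, let `z ∈ ℂ`,
`u := −z/n`, and assume `∫ exp(2·Re(u·w))·(1 + |w|²) dμ(w) < ∞`. With
`M := ∫ exp(2·Re(u·w)) dμ` (note `M > 0`),
`m₁ := (1/M)·∫ w·exp(2·Re(u·w)) dμ`, `s := (1/M)·∫ |w − m₁|²·exp(2·Re(u·w)) dμ`,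
`A := |1 + z·m₁|²`, `B := |z|²·s`, and `X(z)` the first-order reweighted permanent of an
`n×n` matrix with i.i.d. entries of law `μ`, one has
`E[|X(z)|²] = M^{n²} · ∑_{k=0}^{n} A^{n−k}·B^k/k!`. -/
theorem universal_exact_second_moment (n : ℕ) (hn : 1 ≤ n) (μ : Measure ℂ)
    [IsProbabilityMeasure μ] (hmean : (∫ w, w ∂μ) = 0) (z : ℂ)
    (hint : Integrable
      (fun w => Real.exp (2 * ((-z / (n : ℂ)) * w).re) * (1 + ‖w‖ ^ 2)) μ) :
    letI u : ℂ := -z / (n : ℂ)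
    letI M : ℝ := ∫ w, Real.exp (2 * (u * w).re) ∂μ
    letI m₁ : ℂ := (M⁻¹ : ℝ) • ∫ w, Real.exp (2 * (u * w).re) • w ∂μ
    letI s : ℝ := M⁻¹ * ∫ w, ‖w - m₁‖ ^ 2 * Real.exp (2 * (u * w).re) ∂μ
    letI A : ℝ := ‖1 + z * m₁‖ ^ 2
    letI B : ℝ := ‖z‖ ^ 2 * s
    0 < M ∧
      (∫ W : Fin n × Fin n → ℂ,
          ‖(1 / (n.factorial : ℂ)) * per (Matrix.of fun i j => 1 + z * W (i, j)) *
                Complex.exp (-(z * ((1 / (n : ℂ)) * ∑ p : Fin n × Fin n, W p)))‖ ^ 2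
        ∂(Measure.pi fun _ : Fin n × Fin n => μ)) =
        M ^ (n ^ 2) *
          ∑ k ∈ Finset.range (n + 1), A ^ (n - k) * B ^ k / (k.factorial : ℝ) := by
  constructor
  · exact M_pos hint
  set u : ℂ := -z / (n : ℂ) with hu
  set M : ℝ := ∫ w, Real.exp (2 * (u * w).re) ∂μ with hM
  set m₁ : ℂ := (M⁻¹ : ℝ) • ∫ w, Real.exp (2 * (u * w).re) • w ∂μ with hm
  set s : ℝ := M⁻¹ * ∫ w, ‖w - m₁‖ ^ 2 * Real.exp (2 * (u * w).re) ∂μ with hs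
  set A : ℝ := ‖1 + z * m₁‖ ^ 2 with hA
  set B : ℝ := ‖z‖ ^ 2 * s with hB
  have h0 : ((∫ W : Fin n × Fin n → ℂ,
      ‖(1 / (n.factorial : ℂ)) * per (Matrix.of fun i j => 1 + z * W (i, j)) *
        Complex.exp (-(z * ((1 / (n : ℂ)) * ∑ p : Fin n × Fin n, W p)))‖ ^ 2
      ∂(Measure.pi fun _ : Fin n × Fin n => μ) : ℝ) : ℂ)
      = ∫ W : Fin n × Fin n → ℂ,
          ((‖(1 / (n.factorial : ℂ)) * per (Matrix.of fun i j => 1 + z * W (i, j)) *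
            Complex.exp (-(z * ((1 / (n : ℂ)) * ∑ p : Fin n × Fin n, W p)))‖ ^ 2 : ℝ) : ℂ)
        ∂(Measure.pi fun _ : Fin n × Fin n => μ) := integral_ofReal.symm
  refine Complex.ofReal_inj.mp (h0.trans ?_)
  have hpt : ∀ W : Fin n × Fin n → ℂ,
      ((‖(1 / (n.factorial : ℂ)) * per (Matrix.of fun i j => 1 + z * W (i, j)) *
          Complex.exp (-(z * ((1 / (n : ℂ)) * ∑ p : Fin n × Fin n, W p)))‖ ^ 2 : ℝ) : ℂ)
        = ((1 / (n.factorial : ℂ)) * (1 / (n.factorial : ℂ))) *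
            ∑ q : Equiv.Perm (Fin n) × Equiv.Perm (Fin n),
              ∏ p : Fin n × Fin n, Gfun u z (p.2 = q.1 p.1) (p.2 = q.2 p.1) (W p) := by
    intro W
    rw [Complex.sq_norm, ← Complex.mul_conj, hu, pointwise_expand n z W,
      Fintype.sum_prod_type]
  rw [integral_congr_ae (Filter.Eventually.of_forall hpt)]
  have hIntTerm : ∀ q : Equiv.Perm (Fin n) × Equiv.Perm (Fin n),
      Integrable (fun W : Fin n × Fin n → ℂ =>
        ∏ p : Fin n × Fin n, Gfun u z (p.2 = q.1 p.1) (p.2 = q.2 p.1) (W p))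
        (Measure.pi fun _ : Fin n × Fin n => μ) :=
    fun q => pi_integrable_prod μ _ (fun p => integrable_G hint _ _)
  rw [integral_const_mul, integral_finset_sum Finset.univ (fun q _ => hIntTerm q)]
  have hterm : ∀ q : Equiv.Perm (Fin n) × Equiv.Perm (Fin n),
      (∫ W : Fin n × Fin n → ℂ,
          ∏ p : Fin n × Fin n, Gfun u z (p.2 = q.1 p.1) (p.2 = q.2 p.1) (W p)
        ∂(Measure.pi fun _ : Fin n × Fin n => μ))
      = ((M : ℂ)) ^ (n ^ 2) * ((∏ i : Fin n, (if q.1 i = q.2 i then A + B else A) : ℝ) : ℂ) := by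
    intro q
    rw [pi_integral_prod μ (fun (p : Fin n × Fin n) (w : ℂ) => Gfun u z (p.2 = q.1 p.1) (p.2 = q.2 p.1) w)]
    rw [Finset.prod_congr rfl (fun p _ => integral_G hint hM hm hs hA hB
      (p.2 = q.1 p.1) (p.2 = q.2 p.1))]
    exact term_prod n q.1 q.2 _ A B _ (by rw [Complex.mul_conj, hA, Complex.sq_norm])
  rw [Finset.sum_congr rfl (fun q _ => hterm q), ← Finset.mul_sum, ← Complex.ofReal_sum]
  have hrsum : (∑ q : Equiv.Perm (Fin n) × Equiv.Perm (Fin n),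
        ∏ i : Fin n, (if q.1 i = q.2 i then A + B else A) : ℝ)
      = (n.factorial : ℝ) * ∑ k ∈ Finset.range (n + 1),
          ((n.choose k * (n - k).factorial : ℕ) : ℝ) * B ^ k * A ^ (n - k) := by
    rw [Fintype.sum_prod_type, sum_reindex, comb_sum]
  rw [hrsum]
  have hsum2 : (∑ k ∈ Finset.range (n + 1),
        ((n.choose k * (n - k).factorial : ℕ) : ℝ) * B ^ k * A ^ (n - k))
      = (n.factorial : ℝ) * ∑ k ∈ Finset.range (n + 1),
          A ^ (n - k) * B ^ k / (k.factorial : ℝ) := by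
    rw [Finset.mul_sum]
    apply Finset.sum_congr rfl
    intro k hk
    have hkn : k ≤ n := Nat.lt_succ_iff.mp (Finset.mem_range.mp hk)
    have hfact : (n.choose k * k.factorial * (n - k).factorial : ℕ) = n.factorial :=
      Nat.choose_mul_factorial_mul_factorial hkn
    have hck : ((n.choose k * (n - k).factorial : ℕ) : ℝ)
        = (n.factorial : ℝ) / (k.factorial : ℝ) := by
      rw [eq_div_iff (by positivity : (k.factorial : ℝ) ≠ 0), ← Nat.cast_mul, ← hfact]
      push_cast
      ring
    rw [hck]
    field_simp
  rw [hsum2]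
  have hNe : ((n.factorial : ℂ)) ≠ 0 := Nat.cast_ne_zero.mpr n.factorial_ne_zero
  push_cast
  field_simp
end
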